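/- arXiv:2309.09621 — 6 statements merged into one kernel-verified Lean document; each statement's English description precedes it below -/
import Mathlib

section
/- Let n and k be even integers with 2 ≤ k ≤ n−2 and set m = n/2. Then: (i) for all x, y ∈ ℝ^m with Σᵢ xᵢ = Σᵢ yᵢ = 0, one has xᵀB_{n,k}y ≥ −(nk/4)·(minᵢ xᵢ)·(minᵢ yᵢ); and (ii) there exist x, y ∈ ℝ^m with Σᵢ xᵢ = Σᵢ yᵢ = 0 and minᵢ xᵢ = minᵢ yᵢ = −1 such that xᵀB_{n,k}y = −nk/4. -/
open Matrix Finset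

noncomputable def cycP (m : ℕ) [NeZero m] : Matrix (ZMod m) (ZMod m) ℝ :=
  Matrix.of fun i j => if j = i + 1 then 1 else 0

noncomputable def matB (k m : ℕ) [NeZero m] : Matrix (ZMod m) (ZMod m) ℝ :=
  ∑ i ∈ Finset.range (k / 2), cycP m ^ i

section Aux
variable {m : ℕ} [NeZero m]

lemma cycP_mulVec (y : ZMod m → ℝ) (j : ZMod m) : (cycP m *ᵥ y) j = y (j + 1) := by
  simp [cycP, Matrix.mulVec, dotProduct, ite_mul]

lemma cycP_pow_mulVec (i : ℕ) (y : ZMod m → ℝ) (j : ZMod m) :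
    ((cycP m ^ i) *ᵥ y) j = y (j + (i : ZMod m)) := by
  induction i generalizing y j with
  | zero => simp
  | succ i ih =>
      rw [pow_succ, ← Matrix.mulVec_mulVec]
      rw [ih (cycP m *ᵥ y) j, cycP_mulVec]
      push_cast
      ring_nf

lemma sum_shift (c : ZMod m) (y : ZMod m → ℝ) : ∑ j, y (j + c) = ∑ j, y j :=
  Fintype.sum_equiv (Equiv.addRight c) _ _ (fun _ => rfl)

lemma matB_mulVec (k : ℕ) (y : ZMod m → ℝ) (j : ZMod m) :
    (matB k m *ᵥ y) j = ∑ i ∈ Finset.range (k / 2), y (j + (i : ZMod m)) := by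
  rw [matB]
  simp only [Matrix.mulVec, dotProduct, Matrix.sum_apply, Finset.sum_mul]
  rw [Finset.sum_comm]
  refine Finset.sum_congr rfl fun i _ => ?_
  have := cycP_pow_mulVec i y j
  simpa [Matrix.mulVec, dotProduct] using this

lemma dot_matB (k : ℕ) (x y : ZMod m → ℝ) :
    x ⬝ᵥ (matB k m *ᵥ y) = ∑ i ∈ Finset.range (k / 2), ∑ j, x j * y (j + (i : ZMod m)) := by
  simp only [dotProduct, matB_mulVec, Finset.mul_sum]
  rw [Finset.sum_comm]

end Aux

/-- lower bound for `xᵀ B_{n,k} y` over zero-sum vectors, and its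
attainment. -/
theorem statement1 (n k m : ℕ) [NeZero m] (hm : n = 2 * m)
    (hne : Even n) (hke : Even k) (hk2 : 2 ≤ k) (hkn : k ≤ n - 2) :
    (∀ x y : ZMod m → ℝ, ∑ i, x i = 0 → ∑ i, y i = 0 →
      x ⬝ᵥ (matB k m *ᵥ y) ≥ -(((n : ℝ) * k / 4) * (⨅ i, x i) * (⨅ i, y i))) ∧
    (∃ x y : ZMod m → ℝ, ∑ i, x i = 0 ∧ ∑ i, y i = 0 ∧
      (⨅ i, x i) = -1 ∧ (⨅ i, y i) = -1 ∧
      x ⬝ᵥ (matB k m *ᵥ y) = -((n : ℝ) * k / 4)) := by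
  have hm0 : 0 < m := Nat.pos_of_ne_zero (NeZero.ne m)
  set r : ℕ := k / 2 with hr
  have hkr : k = 2 * r := (Nat.two_mul_div_two_of_even hke).symm
  have hr1 : 1 ≤ r := by omega
  have hrm : r < m := by omega
  have hcard : (Finset.univ : Finset (ZMod m)).card = m := by
    rw [Finset.card_univ, ZMod.card]
  have hcast : ((n : ℝ) * k / 4) = (m : ℝ) * r := by
    have : (n : ℝ) = 2 * m := by rw [hm]; push_cast; ring
    have hk' : (k : ℝ) = 2 * r := by rw [hkr]; push_cast; ring
    rw [this, hk']; ring
  constructor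
  · intro x y hx hy
    set a : ℝ := ⨅ i, x i with ha
    set b : ℝ := ⨅ i, y i with hb
    have hbddx : BddBelow (Set.range x) := (Set.finite_range x).bddBelow
    have hbddy : BddBelow (Set.range y) := (Set.finite_range y).bddBelow
    have hax : ∀ i, a ≤ x i := fun i => ciInf_le hbddx i
    have hby : ∀ i, b ≤ y i := fun i => ciInf_le hbddy i
    rw [dot_matB]
    have key : ∀ i : ℕ, -((m : ℝ) * a * b) ≤ ∑ j, x j * y (j + (i : ZMod m)) := by
      intro i
      set c : ZMod m := (i : ZMod m)
      have h1 : (0 : ℝ) ≤ ∑ j, (x j - a) * (y (j + c) - b) :=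
        Finset.sum_nonneg fun j _ => mul_nonneg (by linarith [hax j]) (by linarith [hby (j + c)])
      have h2 : ∑ j, (x j - a) * (y (j + c) - b)
          = (∑ j, x j * y (j + c)) + (m : ℝ) * a * b := by
        have expand : ∀ j : ZMod m, (x j - a) * (y (j + c) - b)
            = x j * y (j + c) - a * y (j + c) - b * x j + a * b := fun j => by ring
        calc ∑ j, (x j - a) * (y (j + c) - b)
            = ∑ j, (x j * y (j + c) - a * y (j + c) - b * x j + a * b) :=
              Finset.sum_congr rfl fun j _ => expand j
          _ = (∑ j, x j * y (j + c)) - a * (∑ j, y (j + c)) - b * (∑ j, x j)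
              + (m : ℝ) * (a * b) := by
              rw [Finset.sum_add_distrib, Finset.sum_sub_distrib, Finset.sum_sub_distrib,
                ← Finset.mul_sum, ← Finset.mul_sum, Finset.sum_const, hcard, nsmul_eq_mul]
          _ = (∑ j, x j * y (j + c)) + (m : ℝ) * a * b := by
              rw [sum_shift, hx, hy]; ring
      linarith
    have hsum : ∑ i ∈ Finset.range r, (-((m : ℝ) * a * b))
        ≤ ∑ i ∈ Finset.range r, ∑ j, x j * y (j + (i : ZMod m)) :=
      Finset.sum_le_sum fun i _ => key i
    rw [Finset.sum_const, Finset.card_range, nsmul_eq_mul] at hsum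
    rw [ge_iff_le, hcast]
    calc -((m : ℝ) * r * a * b) = (r : ℝ) * -((m : ℝ) * a * b) := by ring
      _ ≤ _ := hsum
  · haveI : Fact (1 < m) := ⟨by omega⟩
    have hm1 : (1 : ℝ) ≤ (m : ℝ) := by exact_mod_cast hm0
    set c : ZMod m := (r : ZMod m) with hc
    have hsum_ite : ∀ d : ZMod m, (∑ j : ZMod m, if j = d then (m : ℝ) - 1 else -1) = 0 := by
      intro d
      have h1 : ∀ j : ZMod m, (if j = d then (m : ℝ) - 1 else -1)
          = (if j = d then (m : ℝ) else 0) + (-1) := fun j => by split <;> ring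
      rw [Finset.sum_congr rfl fun j _ => h1 j, Finset.sum_add_distrib,
        Finset.sum_ite_eq' Finset.univ d fun _ => (m : ℝ), Finset.sum_const, hcard,
        nsmul_eq_mul]
      simp
    have hinf_ite : ∀ d : ZMod m, (⨅ j : ZMod m, if j = d then (m : ℝ) - 1 else -1) = -1 := by
      intro d
      apply le_antisymm
      · have hne : d + 1 ≠ d := by
          intro h
          exact one_ne_zero (left_eq_add.mp h.symm)
        have := ciInf_le ((Set.finite_range fun j : ZMod m =>
          if j = d then (m : ℝ) - 1 else -1).bddBelow) (d + 1)
        simpa [hne] using this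
      · refine le_ciInf fun j => ?_
        split
        · linarith
        · exact le_refl _
    set x : ZMod m → ℝ := fun j => if j = 0 then (m : ℝ) - 1 else -1 with hxdef
    set y : ZMod m → ℝ := fun j => if j = c then (m : ℝ) - 1 else -1 with hydef
    have hy0 : ∑ j, y j = 0 := hsum_ite c
    have hic : ∀ i ∈ Finset.range r, ((i : ℕ) : ZMod m) ≠ c := by
      intro i hi h
      rw [Finset.mem_range] at hi
      have h1 := congrArg ZMod.val h
      rw [hc, ZMod.val_cast_of_lt (lt_trans hi hrm), ZMod.val_cast_of_lt hrm] at h1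
      omega
    have hwsum : ∑ j, (matB k m *ᵥ y) j = 0 := by
      calc ∑ j, (matB k m *ᵥ y) j
          = ∑ j : ZMod m, ∑ i ∈ Finset.range r, y (j + (i : ZMod m)) :=
            Finset.sum_congr rfl fun j _ => matB_mulVec k y j
        _ = ∑ i ∈ Finset.range r, ∑ j : ZMod m, y (j + (i : ZMod m)) := Finset.sum_comm
        _ = 0 := Finset.sum_eq_zero fun i _ => by rw [sum_shift, hy0]
    have hw0 : (matB k m *ᵥ y) 0 = -(r : ℝ) := by
      rw [matB_mulVec]
      calc ∑ i ∈ Finset.range r, y ((0 : ZMod m) + (i : ZMod m))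
          = ∑ i ∈ Finset.range r, (-1 : ℝ) := by
            refine Finset.sum_congr rfl fun i hi => ?_
            rw [zero_add, hydef]
            exact if_neg (hic i hi)
        _ = -(r : ℝ) := by simp
    have hdot : x ⬝ᵥ (matB k m *ᵥ y) = (m : ℝ) * (matB k m *ᵥ y) 0
        - ∑ j, (matB k m *ᵥ y) j := by
      set w := matB k m *ᵥ y with hwdef
      have h1 : ∀ j : ZMod m, x j * w j = (if j = 0 then (m : ℝ) * w j else 0) - w j := by
        intro j
        by_cases h : j = 0 <;> simp [hxdef, h] <;> ring
      calc x ⬝ᵥ w = ∑ j, x j * w j := rfl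
        _ = ∑ j : ZMod m, ((if j = 0 then (m : ℝ) * w j else 0) - w j) :=
            Finset.sum_congr rfl fun j _ => h1 j
        _ = (∑ j : ZMod m, if j = 0 then (m : ℝ) * w j else 0) - ∑ j, w j :=
            Finset.sum_sub_distrib _ _
        _ = (m : ℝ) * w 0 - ∑ j, w j := by
            rw [Finset.sum_ite_eq' Finset.univ (0 : ZMod m) fun j => (m : ℝ) * w j]
            simp
    refine ⟨x, y, hsum_ite 0, hsum_ite c, hinf_ite 0, hinf_ite c, ?_⟩
    rw [hdot, hw0, hwsum, hcast]
    ring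
end

section
/- Let n and k be even integers with 2 ≤ k ≤ n−2 and set m = n/2. Then: (i) for all x, y ∈ ℝ^m with Σᵢ xᵢ = Σᵢ yᵢ = 0, one has xᵀC_{n,k}y ≥ −(nk/4)·(minᵢ xᵢ)·(minᵢ yᵢ); and (ii) there exist x, y ∈ ℝ^m with Σᵢ xᵢ = Σᵢ yᵢ = 0 and minᵢ xᵢ = minᵢ yᵢ = −1 such that xᵀC_{n,k}y = −nk/4. -/
open Matrix Finset

/-- `C_{n,k} = Σ_{i=1}^{k/2} Pⁱ`. -/
noncomputable def matC (k m : ℕ) [NeZero m] : Matrix (ZMod m) (ZMod m) ℝ :=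
  ∑ i ∈ Finset.Icc 1 (k / 2), cycP m ^ i

lemma cycP_pow (m : ℕ) [NeZero m] (t : ℕ) (a b : ZMod m) :
    ((cycP m) ^ t) a b = if b = a + (t : ZMod m) then 1 else 0 := by
  induction t generalizing a b with
  | zero => simp [Matrix.one_apply, eq_comm]
  | succ t ih =>
    rw [pow_succ, Matrix.mul_apply]
    have hP : ∀ c : ZMod m, cycP m c b = if b = c + 1 then (1:ℝ) else 0 := fun c => rfl
    simp only [ih, hP, ite_mul, one_mul, zero_mul]
    rw [Finset.sum_ite_eq' Finset.univ (a + (t : ZMod m))]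
    simp [add_assoc]

lemma matC_apply (k m : ℕ) [NeZero m] (a b : ZMod m) :
    matC k m a b = ∑ t ∈ Finset.Icc 1 (k / 2), (if b = a + (t : ZMod m) then (1:ℝ) else 0) := by
  simp [matC, Matrix.sum_apply, cycP_pow]

lemma matC_nonneg (k m : ℕ) [NeZero m] (a b : ZMod m) : 0 ≤ matC k m a b := by
  rw [matC_apply]
  apply Finset.sum_nonneg
  intro t _
  split <;> norm_num

lemma matC_row (k m : ℕ) [NeZero m] (a : ZMod m) :
    ∑ b, matC k m a b = ((k / 2 : ℕ) : ℝ) := by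
  simp_rw [matC_apply]
  rw [Finset.sum_comm]
  simp [Finset.sum_ite_eq']

lemma matC_col (k m : ℕ) [NeZero m] (b : ZMod m) :
    ∑ a, matC k m a b = ((k / 2 : ℕ) : ℝ) := by
  simp_rw [matC_apply]
  rw [Finset.sum_comm]
  have : ∀ t : ℕ, ∑ a : ZMod m, (if b = a + (t : ZMod m) then (1:ℝ) else 0) = 1 := by
    intro t
    have h : ∀ a : ZMod m, (b = a + (t : ZMod m)) ↔ (a = b - (t : ZMod m)) := by
      intro a; exact ⟨fun h => by simp [h], fun h => by simp [h]⟩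
    simp_rw [h]
    simp [Finset.sum_ite_eq']
  simp [this]

lemma matC_expand (k m : ℕ) [NeZero m] (x y : ZMod m → ℝ)
    (hx : ∑ i, x i = 0) (hy : ∑ i, y i = 0) (a b : ℝ) :
    x ⬝ᵥ (matC k m *ᵥ y)
      = (∑ i, ∑ j, matC k m i j * (x i - a) * (y j - b))
        - a * b * (((k / 2 : ℕ) : ℝ) * (m : ℝ)) := by
  have hxy : x ⬝ᵥ (matC k m *ᵥ y) = ∑ i, ∑ j, matC k m i j * x i * y j := by
    simp only [dotProduct, Matrix.mulVec, Finset.mul_sum]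
    exact Finset.sum_congr rfl fun i _ => Finset.sum_congr rfl fun j _ => by ring
  have hbx : ∑ i, ∑ j, matC k m i j * x i = 0 := by
    have h1 : ∀ i : ZMod m, ∑ j, matC k m i j * x i = ((k / 2 : ℕ) : ℝ) * x i := by
      intro i; rw [← Finset.sum_mul, matC_row]
    simp_rw [h1, ← Finset.mul_sum, hx, mul_zero]
  have hay : ∑ i : ZMod m, ∑ j, matC k m i j * y j = 0 := by
    rw [Finset.sum_comm]
    have h1 : ∀ j : ZMod m, ∑ i, matC k m i j * y j = ((k / 2 : ℕ) : ℝ) * y j := by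
      intro j; rw [← Finset.sum_mul, matC_col]
    simp_rw [h1, ← Finset.mul_sum, hy, mul_zero]
  have hab : ∑ i : ZMod m, ∑ j, matC k m i j = ((k / 2 : ℕ) : ℝ) * (m : ℝ) := by
    simp_rw [matC_row]
    simp [Finset.card_univ, ZMod.card, mul_comm]
  have hterm : ∀ i j : ZMod m, matC k m i j * (x i - a) * (y j - b)
      = matC k m i j * x i * y j - b * (matC k m i j * x i)
        - a * (matC k m i j * y j) + (a * b) * matC k m i j := fun i j => by ring
  have hsplit : ∑ i, ∑ j, matC k m i j * (x i - a) * (y j - b)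
      = (∑ i, ∑ j, matC k m i j * x i * y j)
        - b * (∑ i, ∑ j, matC k m i j * x i)
        - a * (∑ i : ZMod m, ∑ j, matC k m i j * y j)
        + (a * b) * (∑ i : ZMod m, ∑ j, matC k m i j) := by
    simp_rw [hterm, Finset.sum_add_distrib, Finset.sum_sub_distrib, ← Finset.mul_sum]
  rw [hsplit, hbx, hay, hab, hxy]
  ring

/-- lower bound for `xᵀ C_{n,k} y` over zero-sum vectors, and its
attainment. -/
theorem statement2 (n k m : ℕ) [NeZero m] (hm : n = 2 * m)
    (hne : Even n) (hke : Even k) (hk2 : 2 ≤ k) (hkn : k ≤ n - 2) :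
    (∀ x y : ZMod m → ℝ, ∑ i, x i = 0 → ∑ i, y i = 0 →
      x ⬝ᵥ (matC k m *ᵥ y) ≥ -(((n : ℝ) * k / 4) * (⨅ i, x i) * (⨅ i, y i))) ∧
    (∃ x y : ZMod m → ℝ, ∑ i, x i = 0 ∧ ∑ i, y i = 0 ∧
      (⨅ i, x i) = -1 ∧ (⨅ i, y i) = -1 ∧
      x ⬝ᵥ (matC k m *ᵥ y) = -((n : ℝ) * k / 4)) := by
  obtain ⟨K, hK⟩ := hke
  have hm2 : 2 ≤ m := by omega
  have hKm : k / 2 ≤ m - 1 := by omega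
  have hcoef : (n : ℝ) * k / 4 = ((k / 2 : ℕ) : ℝ) * (m : ℝ) := by
    have h2 : k / 2 = K := by omega
    rw [h2, hK, hm]
    push_cast
    ring
  constructor
  · intro x y hx hy
    set a := ⨅ i, x i with ha
    set b := ⨅ i, y i with hb
    rw [matC_expand k m x y hx hy a b, ge_iff_le, hcoef]
    have hS : 0 ≤ ∑ i, ∑ j, matC k m i j * (x i - a) * (y j - b) := by
      apply Finset.sum_nonneg; intro i _
      apply Finset.sum_nonneg; intro j _
      have hxa : a ≤ x i := ciInf_le (Set.Finite.bddBelow (Set.finite_range x)) i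
      have hyb : b ≤ y j := ciInf_le (Set.Finite.bddBelow (Set.finite_range y)) j
      exact mul_nonneg (mul_nonneg (matC_nonneg k m i j) (sub_nonneg.2 hxa))
        (sub_nonneg.2 hyb)
    nlinarith
  · set x0 : ZMod m → ℝ := fun i => if i = 0 then (m : ℝ) - 1 else -1 with hx0
    have hval : ∀ i : ZMod m, x0 i = (if i = 0 then (m : ℝ) else 0) + (-1) := by
      intro i; simp only [hx0]; split <;> ring
    have hsum : ∑ i, x0 i = 0 := by
      simp_rw [hval, Finset.sum_add_distrib, Finset.sum_ite_eq']
      simp [Finset.card_univ, ZMod.card]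
    have hne10 : (1 : ZMod m) ≠ 0 := by
      haveI : Fact (1 < m) := ⟨by omega⟩
      exact one_ne_zero
    have hinf : (⨅ i, x0 i) = -1 := by
      apply le_antisymm
      · have h1 : x0 1 = -1 := by simp [hx0, hne10]
        calc (⨅ i, x0 i) ≤ x0 1 := ciInf_le (Set.Finite.bddBelow (Set.finite_range x0)) 1
          _ = -1 := h1
      · apply le_ciInf
        intro i
        simp only [hx0]
        split
        · have : (2 : ℝ) ≤ (m : ℝ) := by exact_mod_cast hm2
          linarith
        · exact le_rfl
    have hC00 : matC k m 0 0 = 0 := by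
      rw [matC_apply]
      apply Finset.sum_eq_zero
      intro t ht
      simp only [Finset.mem_Icc] at ht
      rw [if_neg]
      intro h
      rw [zero_add] at h
      have : (t : ZMod m) = 0 := h.symm
      rw [ZMod.natCast_eq_zero_iff] at this
      have := Nat.le_of_dvd (by omega) this
      omega
    refine ⟨x0, x0, hsum, hsum, hinf, hinf, ?_⟩
    rw [matC_expand k m x0 x0 hsum hsum (-1) (-1), hcoef]
    have hshift : ∀ i : ZMod m, x0 i - (-1) = if i = 0 then (m : ℝ) else 0 := by
      intro i; simp only [hx0]; split <;> ring
    have hS0 : ∑ i, ∑ j, matC k m i j * (x0 i - (-1)) * (x0 j - (-1)) = 0 := by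
      simp_rw [hshift]
      simp [Finset.sum_ite_eq', hC00, mul_ite, ite_mul]
    rw [hS0]
    ring
end

section
/- Let m ≥ 2 be an integer and let a, b ∈ ℝ^m satisfy Σᵢ aᵢ = Σᵢ bᵢ = 0 and minᵢ aᵢ = minᵢ bᵢ = −1. Then the standard inner product satisfies aᵀb ≥ −m. -/
open Finset

/-- if `a, b ∈ ℝ^m` (`m ≥ 2`) have zero coordinate sum and minimal
coordinate `-1`, then `aᵀb ≥ -m`. -/
theorem statement3 (m : ℕ) (hm : 2 ≤ m) (a b : Fin m → ℝ)
    (ha : ∑ i, a i = 0) (hb : ∑ i, b i = 0)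
    (hma : (⨅ i, a i) = -1) (hmb : (⨅ i, b i) = -1) :
    ∑ i, a i * b i ≥ -(m : ℝ) := by
  have hne : Nonempty (Fin m) := ⟨⟨0, by omega⟩⟩
  have hba : ∀ i, -1 ≤ a i := fun i => hma ▸ ciInf_le (Set.finite_range a).bddBelow i
  have hbb : ∀ i, -1 ≤ b i := fun i => hmb ▸ ciInf_le (Set.finite_range b).bddBelow i
  have key : ∀ i ∈ Finset.univ, -a i - b i - 1 ≤ a i * b i := by
    intro i _
    nlinarith [hba i, hbb i]
  have := Finset.sum_le_sum key
  simp [Finset.sum_sub_distrib, ha, hb] at this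
  linarith [this]
end

section
/- Let n and k be even integers with 4 ≤ k ≤ n−2. Then for every j ∈ {1, …, n/2 − 1}: c_{n,k}^{(j)} ≤ k/2 and c_{n,k}^{(j)} ≥ −(1/2)·(1/sin(π/(k+1)) + 1) ≥ −(1/2)·(μ·(k+1) + 1). -/
open Real

/-- `|sin (m x)| ≤ m |sin x|`. -/
lemma abs_sin_nat_mul_le (m : ℕ) (x : ℝ) : |Real.sin (m * x)| ≤ m * |Real.sin x| := by
  induction m with
  | zero => simp
  | succ m ih =>
    have h : ((m : ℝ) + 1) * x = m * x + x := by ring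
    push_cast
    rw [h, Real.sin_add]
    calc |Real.sin (m * x) * Real.cos x + Real.cos (m * x) * Real.sin x|
        ≤ |Real.sin (m * x) * Real.cos x| + |Real.cos (m * x) * Real.sin x| := abs_add_le _ _
      _ ≤ |Real.sin (m * x)| * 1 + 1 * |Real.sin x| := by
          rw [abs_mul, abs_mul]
          gcongr <;> first | exact Real.abs_cos_le_one _ | exact abs_nonneg _
      _ ≤ (m : ℝ) * |Real.sin x| + 1 * |Real.sin x| := by
          rw [mul_one]; gcongr
      _ = ((m : ℝ) + 1) * |Real.sin x| := by ring

/-- `sin (π/5) = √((5 − √5)/8)`. -/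
lemma sin_pi_div_five : Real.sin (Real.pi / 5) = Real.sqrt ((5 - Real.sqrt 5) / 8) := by
  have h5 : Real.sqrt 5 ^ 2 = 5 := Real.sq_sqrt (by norm_num)
  have h1 : (0 : ℝ) ≤ Real.pi / 5 := by positivity
  have h2 : Real.pi / 5 ≤ Real.pi := by linarith [Real.pi_pos]
  rw [Real.sin_eq_sqrt_one_sub_cos_sq h1 h2, Real.cos_pi_div_five]
  congr 1
  nlinarith [h5]

/-- `μ⁻¹ = 5 sin (π/5)`. -/
lemma mu_inv_eq : ((5 / 2 : ℝ) * Real.sqrt ((5 - Real.sqrt 5) / 2)) = 5 * Real.sin (Real.pi / 5) := by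
  rw [sin_pi_div_five]
  have h : ((5 - Real.sqrt 5) / 2 : ℝ) = 4 * ((5 - Real.sqrt 5) / 8) := by ring
  rw [h, Real.sqrt_mul (by norm_num : (0:ℝ) ≤ 4),
    show Real.sqrt 4 = 2 by rw [show (4:ℝ) = 2 ^ 2 by norm_num, Real.sqrt_sq (by norm_num)]]
  ring

lemma sin_pi_div_five_pos : 0 < Real.sin (Real.pi / 5) :=
  Real.sin_pos_of_pos_of_lt_pi (by positivity) (by linarith [Real.pi_pos])

/-- concavity bound: for `0 ≤ t ≤ 1`, `t · sin(π/5) ≤ sin (t · (π/5))`. -/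
lemma concave_sin_bound {t : ℝ} (h0 : 0 ≤ t) (h1 : t ≤ 1) :
    t * Real.sin (Real.pi / 5) ≤ Real.sin (t * (Real.pi / 5)) := by
  have hmem0 : (0 : ℝ) ∈ Set.Icc (0 : ℝ) Real.pi := ⟨le_refl _, Real.pi_pos.le⟩
  have hmem5 : (Real.pi / 5) ∈ Set.Icc (0 : ℝ) Real.pi :=
    ⟨by positivity, by linarith [Real.pi_pos]⟩
  have h := strictConcaveOn_sin_Icc.concaveOn.2
  have h2 := h hmem0 hmem5 (a := 1 - t) (b := t) (by linarith) h0 (by ring)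
  simpa using h2

/-- The eigenvalues `c_{n,k}^{(j)} = (1/2)·(sin(2π(k+1)j/n)/sin(2πj/n) − 1)`. -/
noncomputable def cnk (n k j : ℕ) : ℝ :=
  (1 / 2) * (Real.sin (2 * Real.pi * (k + 1) * j / n) / Real.sin (2 * Real.pi * j / n) - 1)

/-- The constant `μ = ((5/2)·√((5−√5)/2))⁻¹ ≈ 0.34026`. -/
noncomputable def mu : ℝ := ((5 / 2) * Real.sqrt ((5 - Real.sqrt 5) / 2))⁻¹

/-- for even `n, k` with `4 ≤ k ≤ n−2` and `1 ≤ j ≤ n/2 − 1`: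
`c_{n,k}^{(j)} ≤ k/2` and
`c_{n,k}^{(j)} ≥ −(1/2)(1/sin(π/(k+1)) + 1) ≥ −(1/2)(μ(k+1) + 1)`. -/
theorem statement5 (n k : ℕ) (hne : Even n) (hke : Even k)
    (hk4 : 4 ≤ k) (hkn : k ≤ n - 2) :
    ∀ j : ℕ, 1 ≤ j → j ≤ n / 2 - 1 →
      cnk n k j ≤ (k : ℝ) / 2 ∧
      cnk n k j ≥ -(1 / 2) * (1 / Real.sin (Real.pi / (k + 1)) + 1) ∧
      -(1 / 2) * (1 / Real.sin (Real.pi / (k + 1)) + 1) ≥ -(1 / 2) * (mu * (k + 1) + 1) := by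
  intro j hj1 hj2
  have hpi := Real.pi_pos
  have hn6 : 6 ≤ n := by omega
  have hn0 : (0 : ℝ) < n := by positivity
  set K : ℝ := (k : ℝ) + 1 with hK
  have hK5 : (5 : ℝ) ≤ K := by
    have : (4 : ℝ) ≤ (k : ℝ) := by exact_mod_cast hk4
    rw [hK]; linarith
  have hK0 : (0 : ℝ) < K := by linarith
  set θ : ℝ := 2 * Real.pi * j / n with hθ
  have hj1' : (1 : ℝ) ≤ (j : ℝ) := by exact_mod_cast hj1
  have hθpos : 0 < θ := by
    rw [hθ]
    apply div_pos _ hn0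
    positivity
  have h2j : 2 * j + 2 ≤ n := by
    obtain ⟨m, hm⟩ := hne
    omega
  have h2j' : 2 * (j : ℝ) + 2 ≤ (n : ℝ) := by exact_mod_cast h2j
  have hθlt : θ < Real.pi := by
    rw [hθ, div_lt_iff₀ hn0]
    nlinarith
  have hsθ : 0 < Real.sin θ := Real.sin_pos_of_pos_of_lt_pi hθpos hθlt
  have hcnk : cnk n k j = (1 / 2) * (Real.sin (K * θ) / Real.sin θ - 1) := by
    rw [cnk, hK, hθ]
    congr 3
    ring
  set s : ℝ := Real.sin (Real.pi / K) with hs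
  have hsK1 : Real.pi / K ≤ Real.pi / 5 :=
    div_le_div_of_nonneg_left hpi.le (by norm_num) hK5
  have hsKpos : 0 < Real.pi / K := by positivity
  have hs0 : 0 < s := Real.sin_pos_of_pos_of_lt_pi hsKpos (by linarith)
  -- Upper bound
  have hupper : cnk n k j ≤ (k : ℝ) / 2 := by
    have habs : |Real.sin ((k + 1 : ℕ) * θ)| ≤ ((k + 1 : ℕ) : ℝ) * |Real.sin θ| :=
      abs_sin_nat_mul_le (k + 1) θ
    have hKθ : ((k + 1 : ℕ) : ℝ) = K := by rw [hK]; push_cast; ring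
    rw [hKθ] at habs
    have h1 : Real.sin (K * θ) ≤ K * Real.sin θ := by
      calc Real.sin (K * θ) ≤ |Real.sin (K * θ)| := le_abs_self _
        _ ≤ K * |Real.sin θ| := habs
        _ = K * Real.sin θ := by rw [abs_of_pos hsθ]
    have h2 : Real.sin (K * θ) / Real.sin θ ≤ K := by
      rw [div_le_iff₀ hsθ]
      linarith
    rw [hcnk]
    rw [hK] at h2
    linarith
  -- ratio lower bound
  have hratio : -(1 / s) ≤ Real.sin (K * θ) / Real.sin θ := by
    rcases le_or_gt θ (Real.pi / K) with hcase | hcase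
    · have hKθle : K * θ ≤ Real.pi := by
        calc K * θ ≤ K * (Real.pi / K) := by gcongr
          _ = Real.pi := by field_simp
      have hnn : 0 ≤ Real.sin (K * θ) :=
        Real.sin_nonneg_of_nonneg_of_le_pi (by positivity) hKθle
      have h0 : (0:ℝ) ≤ Real.sin (K * θ) / Real.sin θ := div_nonneg hnn hsθ.le
      have : 0 < 1 / s := by positivity
      linarith
    · rcases le_or_gt (Real.pi - Real.pi / K) θ with hcase2 | hcase2
      · obtain ⟨m, hm⟩ := hke
        have hkm : (k : ℝ) = 2 * m := by
          have : k = 2 * m := by omega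
          exact_mod_cast this
        have heq : K * θ = (K * θ - k * Real.pi) + (m : ℝ) * (2 * Real.pi) := by
          rw [hK, hkm]; ring
        have hsin : Real.sin (K * θ) = Real.sin (K * θ - k * Real.pi) := by
          conv_lhs => rw [heq]
          exact Real.sin_add_nat_mul_two_pi _ m
        have hKexp : K * (Real.pi - Real.pi / K) = K * Real.pi - Real.pi := by
          field_simp
        have hk' : (k : ℝ) = K - 1 := by rw [hK]; ring
        have hlow : 0 ≤ K * θ - k * Real.pi := by
          have h := mul_le_mul_of_nonneg_left hcase2 hK0.le
          rw [hKexp] at h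
          rw [hk']
          linarith
        have hhigh : K * θ - k * Real.pi ≤ Real.pi := by
          have h : K * θ ≤ K * Real.pi := mul_le_mul_of_nonneg_left hθlt.le hK0.le
          rw [hk']
          linarith
        have hnn : 0 ≤ Real.sin (K * θ) := by
          rw [hsin]
          exact Real.sin_nonneg_of_nonneg_of_le_pi hlow hhigh
        have h0 : (0:ℝ) ≤ Real.sin (K * θ) / Real.sin θ := div_nonneg hnn hsθ.le
        have : 0 < 1 / s := by positivity
        linarith
      · have hsθs : s ≤ Real.sin θ := by
          rcases le_or_gt θ (Real.pi / 2) with hθ2 | hθ2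
          · exact Real.sin_le_sin_of_le_of_le_pi_div_two (by linarith) hθ2 hcase.le
          · rw [← Real.sin_pi_sub θ]
            apply Real.sin_le_sin_of_le_of_le_pi_div_two (by linarith) (by linarith)
            linarith
        have h1 : (-1 : ℝ) / Real.sin θ ≤ Real.sin (K * θ) / Real.sin θ :=
          (div_le_div_iff_of_pos_right hsθ).mpr (Real.neg_one_le_sin _)
        have h2 : 1 / Real.sin θ ≤ 1 / s := one_div_le_one_div_of_le hs0 hsθs
        have h3 : (-1 : ℝ) / Real.sin θ = -(1 / Real.sin θ) := by ring
        linarith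
  have hlower : cnk n k j ≥ -(1 / 2) * (1 / s + 1) := by
    rw [hcnk]
    linarith
  -- part 3
  have hmu_inv : mu⁻¹ = 5 * Real.sin (Real.pi / 5) := by
    rw [mu, inv_inv, mu_inv_eq]
  have hmu0 : 0 < mu := by
    rw [mu, mu_inv_eq]
    exact inv_pos.mpr (mul_pos (by norm_num) sin_pi_div_five_pos)
  have hconc := concave_sin_bound (t := 5 / K) (by positivity)
    ((div_le_one hK0).mpr hK5)
  have harg : (5 / K) * (Real.pi / 5) = Real.pi / K := by
    field_simp
  rw [harg] at hconc
  have hsge : 5 / K * Real.sin (Real.pi / 5) ≤ s := hconc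
  have hmuK : 1 / s ≤ mu * K := by
    rw [div_le_iff₀ hs0]
    have hprod : mu * (5 * Real.sin (Real.pi / 5)) = 1 := by
      rw [← hmu_inv]
      exact mul_inv_cancel₀ (ne_of_gt hmu0)
    have : mu * K * (5 / K * Real.sin (Real.pi / 5)) ≤ mu * K * s := by
      apply mul_le_mul_of_nonneg_left hsge
      positivity
    have hKne : K ≠ 0 := ne_of_gt hK0
    have heq2 : mu * K * (5 / K * Real.sin (Real.pi / 5)) = mu * (5 * Real.sin (Real.pi / 5)) := by
      field_simp
    rw [heq2, hprod] at this
    linarith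
  refine ⟨hupper, hlower, ?_⟩
  linarith
end

section
/- For every odd integer r ≥ 3 and every real x with 0 < x < π, one has sin(r·x) ≥ −sin(x)/sin(π/r); equivalently, sin(r·x)/sin(x) ≥ −1/sin(π/r). -/
/-- for every odd integer `r ≥ 3` and `0 < x < π`,
`sin(r·x) ≥ −sin(x)/sin(π/r)`, equivalently `sin(r·x)/sin(x) ≥ −1/sin(π/r)`. -/
theorem statement7 (r : ℕ) (hr : 3 ≤ r) (hodd : Odd r)
    (x : ℝ) (hx0 : 0 < x) (hxpi : x < Real.pi) :
    Real.sin (r * x) ≥ -Real.sin x / Real.sin (Real.pi / r) ∧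
    Real.sin (r * x) / Real.sin x ≥ -1 / Real.sin (Real.pi / r) := by
  have pipos := Real.pi_pos
  have hr3 : (3:ℝ) ≤ (r:ℝ) := by exact_mod_cast hr
  have hrpos : (0:ℝ) < r := by linarith
  have hpr0 : 0 < Real.pi / r := div_pos pipos hrpos
  have hprpi : Real.pi / r < Real.pi := by
    rw [div_lt_iff₀ hrpos]; nlinarith
  have hsinpr : 0 < Real.sin (Real.pi / r) := Real.sin_pos_of_pos_of_lt_pi hpr0 hprpi
  have hsinx : 0 < Real.sin x := Real.sin_pos_of_pos_of_lt_pi hx0 hxpi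
  -- main inequality in product form
  have key : Real.sin (↑r * x) * Real.sin (Real.pi / r) ≥ -Real.sin x := by
    rcases le_or_gt 0 (Real.sin (↑r * x)) with h | h
    · nlinarith
    · -- sin(rx) < 0 : show π/r ≤ x ≤ π - π/r, hence sin x ≥ sin(π/r)
      have hxl : Real.pi / r < x := by
        by_contra hle
        push_neg at hle
        have : 0 ≤ Real.sin (↑r * x) := by
          apply Real.sin_nonneg_of_nonneg_of_le_pi
          · positivity
          · rw [le_div_iff₀ hrpos] at hle; nlinarith
        linarith
      have hxu : x < Real.pi - Real.pi / r := by
        by_contra hle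
        push_neg at hle
        obtain ⟨k, hk⟩ := hodd
        have hkr : (r:ℝ) = 2 * k + 1 := by exact_mod_cast hk
        have : 0 ≤ Real.sin (↑r * x) := by
          have h1 : ↑r * x = (↑r * x - ↑k * (2 * Real.pi)) + ↑k * (2 * Real.pi) := by ring
          rw [h1, Real.sin_add_nat_mul_two_pi]
          apply Real.sin_nonneg_of_nonneg_of_le_pi
          · have : (r:ℝ) * (Real.pi - Real.pi / r) = (r - 1) * Real.pi := by
              field_simp
            nlinarith [mul_le_mul_of_nonneg_left hle (le_of_lt hrpos)]
          · nlinarith [mul_lt_mul_of_pos_left hxpi hrpos]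
        linarith
      have hsge : Real.sin (Real.pi / r) ≤ Real.sin x := by
        rcases le_or_gt x (Real.pi / 2) with hx2 | hx2
        · exact Real.sin_le_sin_of_le_of_le_pi_div_two (by linarith) hx2 (le_of_lt hxl)
        · rw [← Real.sin_pi_sub x]
          exact Real.sin_le_sin_of_le_of_le_pi_div_two (by linarith) (by linarith) (by linarith)
      nlinarith [Real.neg_one_le_sin (↑r * x)]
  constructor
  · rw [ge_iff_le, div_le_iff₀ hsinpr]
    nlinarith
  · rw [ge_iff_le, div_le_div_iff₀ hsinpr hsinx]
    nlinarith
end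

section
/- Let k ≥ 2 be an even integer. If n = 2k, then for every j ∈ {1, …, n/2 − 1}, c_{n,k}^{(j)} = ((−1)^j − 1)/2; if n = 2k+4, then for every j ∈ {1, …, n/2 − 1}, c_{n,k}^{(j)} = ((−1)^{j+1} − 1)/2. In particular, in both cases each c_{n,k}^{(j)} lies in {−1, 0}. -/
open Real

lemma cos_nat_pi (n : ℕ) : Real.cos (n * π) = (-1) ^ n := by
  have := Real.cos_nat_mul_pi_sub 0 n
  simpa using this

lemma sin_nat_pi_add (n : ℕ) (x : ℝ) :
    Real.sin (n * π + x) = (-1) ^ n * Real.sin x := by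
  rw [Real.sin_add, Real.sin_nat_mul_pi, cos_nat_pi]; ring

lemma sin_nat_pi_sub (n : ℕ) (x : ℝ) :
    Real.sin (n * π - x) = (-1) ^ (n + 1) * Real.sin x := by
  rw [Real.sin_sub, Real.sin_nat_mul_pi, cos_nat_pi, pow_succ]; ring

/-- for even `k ≥ 2`: if `n = 2k` then `c_{n,k}^{(j)} = ((−1)^j − 1)/2`;
if `n = 2k+4` then `c_{n,k}^{(j)} = ((−1)^{j+1} − 1)/2`. In both cases each
`c_{n,k}^{(j)}` lies in `{−1, 0}`. -/
theorem statement14 (k : ℕ) (hke : Even k) (hk2 : 2 ≤ k) :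
    (∀ j : ℕ, 1 ≤ j → j ≤ (2 * k) / 2 - 1 →
      cnk (2 * k) k j = ((-1 : ℝ) ^ j - 1) / 2 ∧
      cnk (2 * k) k j ∈ ({-1, 0} : Set ℝ)) ∧
    (∀ j : ℕ, 1 ≤ j → j ≤ (2 * k + 4) / 2 - 1 →
      cnk (2 * k + 4) k j = ((-1 : ℝ) ^ (j + 1) - 1) / 2 ∧
      cnk (2 * k + 4) k j ∈ ({-1, 0} : Set ℝ)) := by
  have hπ := Real.pi_pos
  constructor
  · intro j hj1 hj2
    have hj2' : j ≤ k - 1 := by omega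
    have hjk : (j : ℝ) < k := by
      have : j < k := by omega
      exact_mod_cast this
    have hk0 : (0 : ℝ) < k := by positivity
    have hjpos : (0 : ℝ) < j := by exact_mod_cast hj1
    -- denominator angle
    have hden : 2 * π * j / (2 * k) = π * j / k := by ring
    have hsinpos : 0 < Real.sin (π * j / k) := by
      apply Real.sin_pos_of_pos_of_lt_pi
      · positivity
      · rw [div_lt_iff₀ hk0]
        nlinarith
    have hnum : 2 * π * (k + 1) * j / (2 * k) = j * π + π * j / k := by
      field_simp
    have key : cnk (2 * k) k j = ((-1 : ℝ) ^ j - 1) / 2 := by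
      unfold cnk
      push_cast
      rw [hnum, hden, sin_nat_pi_add, mul_div_assoc,
        div_self (ne_of_gt hsinpos)]
      ring
    refine ⟨key, ?_⟩
    rw [key]
    rcases Nat.even_or_odd j with he | ho
    · right; rw [he.neg_one_pow]; norm_num
    · left; rw [ho.neg_one_pow]; norm_num
  · intro j hj1 hj2
    have hj2' : j ≤ k + 1 := by omega
    have hjk : (j : ℝ) < k + 2 := by
      have : j < k + 2 := by omega
      exact_mod_cast this
    have hk0 : (0 : ℝ) < (k : ℝ) + 2 := by positivity
    have hjpos : (0 : ℝ) < j := by exact_mod_cast hj1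
    have h1 : (2 * (k:ℝ) + 4) ≠ 0 := by positivity
    have h2 : ((k:ℝ) + 2) ≠ 0 := ne_of_gt hk0
    have hden : 2 * π * j / (2 * k + 4) = π * j / (k + 2) := by
      field_simp
      ring
    have hsinpos : 0 < Real.sin (π * j / (k + 2)) := by
      apply Real.sin_pos_of_pos_of_lt_pi
      · positivity
      · rw [div_lt_iff₀ hk0]
        nlinarith
    have hnum : 2 * π * (k + 1) * j / (2 * k + 4) = j * π - π * j / (k + 2) := by
      field_simp
      ring
    have key : cnk (2 * k + 4) k j = ((-1 : ℝ) ^ (j + 1) - 1) / 2 := by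
      unfold cnk
      push_cast
      rw [hnum, hden, sin_nat_pi_sub, mul_div_assoc, div_self (ne_of_gt hsinpos)]
      ring
    refine ⟨key, ?_⟩
    rw [key]
    rcases Nat.even_or_odd (j + 1) with he | ho
    · right; rw [he.neg_one_pow]; norm_num
    · left; rw [ho.neg_one_pow]; norm_num
end
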